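/- arXiv:1205.2880 — 6 statements merged into one kernel-verified Lean document; each statement's English description precedes it below -/
import Mathlib

section
/- Let q be a point in a metric space and let L : Fin n → X be a finite sequence of points (a trajectory). For indices s ≤ e, define the match distance matchDist(q, s, e) = min(d(q, L s), d(q, L e)) + Σ_{i=s}^{e-1} d(L i, L (i+1)). Then for every index i with s ≤ i ≤ e, we have matchDist(q, s, e) ≥ d(q, L i). -/
open Finset

/-- Match distance of the sub-trajectory from place `s` to place `e` of trajectory `L`
with respect to query location `q`. -/
noncomputable def matchDist {X : Type*} [MetricSpace X] (q : X) (L : ℕ → X) (s e : ℕ) : ℝ :=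
  min (dist q (L s)) (dist q (L e)) + ∑ i ∈ Finset.Ico s e, dist (L i) (L (i + 1))

theorem stmt_0 {X : Type*} [MetricSpace X] (n : ℕ) (q : X) (L : ℕ → X)
    (s e : ℕ) (hse : s ≤ e) (hen : e < n) :
    ∀ i, s ≤ i → i ≤ e → dist q (L i) ≤ matchDist q L s e := by
  intro i hsi hie
  unfold matchDist
  rcases le_total (dist q (L s)) (dist q (L e)) with h | h
  · rw [min_eq_left h]
    have h1 : dist (L s) (L i) ≤ ∑ j ∈ Finset.Ico s i, dist (L j) (L (j + 1)) :=
      dist_le_Ico_sum_dist _ hsi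
    have h2 : ∑ j ∈ Finset.Ico s i, dist (L j) (L (j + 1)) ≤
        ∑ j ∈ Finset.Ico s e, dist (L j) (L (j + 1)) :=
      Finset.sum_le_sum_of_subset_of_nonneg
        (Finset.Ico_subset_Ico le_rfl hie) (fun _ _ _ => dist_nonneg)
    calc dist q (L i) ≤ dist q (L s) + dist (L s) (L i) := dist_triangle _ _ _
      _ ≤ _ := by linarith
  · rw [min_eq_right h]
    have h1 : dist (L i) (L e) ≤ ∑ j ∈ Finset.Ico i e, dist (L j) (L (j + 1)) :=
      dist_le_Ico_sum_dist _ hie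
    have h2 : ∑ j ∈ Finset.Ico i e, dist (L j) (L (j + 1)) ≤
        ∑ j ∈ Finset.Ico s e, dist (L j) (L (j + 1)) :=
      Finset.sum_le_sum_of_subset_of_nonneg
        (Finset.Ico_subset_Ico hsi le_rfl) (fun _ _ _ => dist_nonneg)
    calc dist q (L i) ≤ dist q (L e) + dist (L e) (L i) := dist_triangle _ _ _
      _ = dist q (L e) + dist (L i) (L e) := by rw [dist_comm (L e)]
      _ ≤ _ := by linarith
end

section
/- With matchDist defined as matchDist(q, s, e) = min(d(q, L s), d(q, L e)) + Σ_{i=s}^{e-1} d(L i, L (i+1)), if ps ≤ s ≤ e ≤ ed then matchDist(q, s, e) ≤ matchDist(q, ps, ed). That is, the match distance of a contained sub-trajectory is at most the match distance of any sub-trajectory containing it. -/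
open Finset

theorem stmt_1 {X : Type*} [MetricSpace X] (n : ℕ) (q : X) (L : ℕ → X)
    (ps s e ed : ℕ) (h1 : ps ≤ s) (h2 : s ≤ e) (h3 : e ≤ ed) (h4 : ed < n) :
    matchDist q L s e ≤ matchDist q L ps ed := by
  set P1 := ∑ i ∈ Finset.Ico ps s, dist (L i) (L (i + 1)) with hP1
  set P2 := ∑ i ∈ Finset.Ico s e, dist (L i) (L (i + 1)) with hP2
  set P3 := ∑ i ∈ Finset.Ico e ed, dist (L i) (L (i + 1)) with hP3
  have hdec : ∑ i ∈ Finset.Ico ps ed, dist (L i) (L (i + 1)) = P1 + P2 + P3 := by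
    rw [hP1, hP2, hP3, Finset.sum_Ico_consecutive _ h1 h2,
      Finset.sum_Ico_consecutive _ (h1.trans h2) h3]
  have hP1n : 0 ≤ P1 := Finset.sum_nonneg fun _ _ => dist_nonneg
  have hP3n : 0 ≤ P3 := Finset.sum_nonneg fun _ _ => dist_nonneg
  have hA : dist q (L s) ≤ dist q (L ps) + P1 :=
    le_trans (dist_triangle q (L ps) (L s))
      (by gcongr; exact dist_le_Ico_sum_dist _ h1)
  have hB : dist q (L e) ≤ dist q (L ed) + P3 := by
    have := dist_le_Ico_sum_dist (fun i => L i) h3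
    calc dist q (L e) ≤ dist q (L ed) + dist (L ed) (L e) := dist_triangle _ _ _
      _ ≤ dist q (L ed) + P3 := by
          gcongr
          rw [dist_comm]
          exact dist_le_Ico_sum_dist _ h3
  have hmin : min (dist q (L s)) (dist q (L e)) ≤
      min (dist q (L ps)) (dist q (L ed)) + P1 + P3 := by
    rcases le_total (dist q (L ps)) (dist q (L ed)) with h | h
    · calc min _ _ ≤ dist q (L s) := min_le_left _ _
        _ ≤ dist q (L ps) + P1 := hA
        _ ≤ min (dist q (L ps)) (dist q (L ed)) + P1 + P3 := by
            rw [min_eq_left h]; linarith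
    · calc min _ _ ≤ dist q (L e) := min_le_right _ _
        _ ≤ dist q (L ed) + P3 := hB
        _ ≤ min (dist q (L ps)) (dist q (L ed)) + P1 + P3 := by
            rw [min_eq_right h]; linarith
  unfold matchDist
  rw [hdec]
  linarith
end

section
/- Pruning-2 correctness: if min(d(q, L b), d(q, L m)) + Σ_{j=b}^{m-1} d(L j, L (j+1)) > ξ for indices b ≤ m, then for every e ≥ m the sub-trajectory (b, e) satisfies matchDist(q, b, e) > ξ. -/
open Finset

theorem stmt_7 {X : Type*} [MetricSpace X] (n : ℕ) (q : X) (L : ℕ → X) (ξ : ℝ)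
    (b m : ℕ) (hbm : b ≤ m)
    (h : ξ < min (dist q (L b)) (dist q (L m)) + ∑ j ∈ Finset.Ico b m, dist (L j) (L (j + 1))) :
    ∀ e, m ≤ e → e < n → ξ < matchDist q L b e := by
  intro e hme _
  have hsplit : ∑ i ∈ Finset.Ico b e, dist (L i) (L (i + 1)) =
      (∑ i ∈ Finset.Ico b m, dist (L i) (L (i + 1))) +
      ∑ i ∈ Finset.Ico m e, dist (L i) (L (i + 1)) :=
    (Finset.sum_Ico_consecutive _ hbm hme).symm
  have hpath : dist (L m) (L e) ≤ ∑ i ∈ Finset.Ico m e, dist (L i) (L (i + 1)) :=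
    dist_le_Ico_sum_dist _ hme
  have hPme : (0:ℝ) ≤ ∑ i ∈ Finset.Ico m e, dist (L i) (L (i + 1)) :=
    Finset.sum_nonneg fun _ _ => dist_nonneg
  have hqm : dist q (L m) ≤ dist q (L e) + ∑ i ∈ Finset.Ico m e, dist (L i) (L (i + 1)) :=
    le_trans (dist_triangle q (L e) (L m))
      (by rw [dist_comm (L e) (L m)]; linarith)
  have key : min (dist q (L b)) (dist q (L m)) ≤
      min (dist q (L b)) (dist q (L e)) + ∑ i ∈ Finset.Ico m e, dist (L i) (L (i + 1)) := by
    rcases le_total (dist q (L b)) (dist q (L e)) with hc | hc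
    · rw [min_eq_left hc]; exact le_trans (min_le_left _ _) (by linarith)
    · rw [min_eq_right hc]; exact le_trans (min_le_right _ _) hqm
  unfold matchDist
  rw [hsplit]
  linarith
end

section
/- Pruning-3 correctness: if the sub-trajectory (s, e) matches query Q, then for every e' ≥ e, matchDist(q, s, e') ≥ matchDist(q, s, e). Hence once a match ending at e is found, extending the end index cannot yield a smaller match distance for the same start index. -/
open Finset

/-- Union of the keyword sets of places `s` through `e`. -/
def cover {W : Type*} (ψ : ℕ → Set W) (s e : ℕ) : Set W := ⋃ i ∈ Finset.Icc s e, ψ i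

lemma path_dist {X : Type*} [MetricSpace X] (L : ℕ → X) (e : ℕ) :
    ∀ e', e ≤ e' → dist (L e) (L e') ≤ ∑ i ∈ Finset.Ico e e', dist (L i) (L (i + 1)) := by
  intro e' h
  induction e' with
  | zero => simp [Nat.le_zero.mp h]
  | succ m ih =>
    rcases Nat.eq_or_lt_of_le h with h' | h'
    · simp [← h']
    · have hm : e ≤ m := Nat.lt_succ_iff.mp h'
      rw [Finset.sum_Ico_succ_top hm]
      calc dist (L e) (L (m+1)) ≤ dist (L e) (L m) + dist (L m) (L (m+1)) := dist_triangle _ _ _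
        _ ≤ _ := by linarith [ih hm]

theorem stmt_8 {X W : Type*} [MetricSpace X] (n : ℕ) (q : X) (L : ℕ → X)
    (ψ : ℕ → Set W) (Q : Set W) (s e : ℕ) (hse : s ≤ e) (hen : e < n)
    (hmatch : Q ⊆ cover ψ s e) :
    ∀ e', e ≤ e' → e' < n → matchDist q L s e ≤ matchDist q L s e' := by
  intro e' hee' _
  unfold matchDist
  have hsum : ∑ i ∈ Finset.Ico s e, dist (L i) (L (i+1)) + ∑ i ∈ Finset.Ico e e', dist (L i) (L (i+1)) = ∑ i ∈ Finset.Ico s e', dist (L i) (L (i+1)) :=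
    Finset.sum_Ico_consecutive _ hse hee'
  have hpath := path_dist L e e' hee'
  have htri : dist q (L e) ≤ dist q (L e') + dist (L e) (L e') := by
    rw [dist_comm (L e)]; exact dist_triangle _ _ _
  rcases le_total (dist q (L s)) (dist q (L e')) with h | h
  · have : min (dist q (L s)) (dist q (L e)) ≤ dist q (L s) := min_le_left _ _
    simp only [min_eq_left h]
    have hnn : (0:ℝ) ≤ ∑ i ∈ Finset.Ico e e', dist (L i) (L (i+1)) :=
      Finset.sum_nonneg (fun _ _ => dist_nonneg)
    linarith
  · simp only [min_eq_right h]
    have : min (dist q (L s)) (dist q (L e)) ≤ dist q (L e) := min_le_right _ _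
    linarith
end

section
/- Consequence for query coverage (Lemma on fragment words): under the odd/even association rule above, if a query Q satisfies Q ⊆ ⋃_{j=a}^{b} F j for some interval [a, b] with a ≤ b, then there exists an index i ∈ [a, b] with Q ⊆ assoc(i). Thus any trajectory matching the query inside a union of adjacent cells is retrievable from a single cell whose associated keyword set covers Q. -/
/-! An even cell `i` covers `F 1, …, F (i + 1)`. So if `b` is even, cell `b` works; if `b` is odd
and `a < b`, the even cell `b - 1` covers `F 1, …, F b`; and if `a = b` is odd, `Q ⊆ F a = assoc a`. -/

open Finset

/-- Keyword set associated with fragment i (fragments are 1-indexed). -/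
def assoc {W : Type*} (m : ℕ) (F : ℕ → Set W) (i : ℕ) : Set W :=
  if Odd i then F i else ⋃ j ∈ Finset.Icc 1 (min (i + 1) m), F j

section assoc

variable {W : Type*} {m : ℕ} {F : ℕ → Set W} {i : ℕ}

theorem assoc_of_odd (hi : Odd i) : assoc m F i = F i := if_pos hi

theorem assoc_of_even (hi : Even i) :
    assoc m F i = ⋃ j ∈ Icc 1 (min (i + 1) m), F j :=
  if_neg (Nat.not_odd_iff_even.mpr hi)

theorem biUnion_Icc_subset_assoc_of_even {a b : ℕ} (hi : Even i) (ha : 1 ≤ a)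
    (hbi : b ≤ i + 1) (hbm : b ≤ m) : ⋃ j ∈ Icc a b, F j ⊆ assoc m F i := by
  rw [assoc_of_even hi]
  refine Set.biUnion_subset_biUnion_left fun j hj => ?_
  simp only [coe_Icc, Set.mem_Icc] at hj ⊢
  omega

end assoc

theorem stmt_12 {W : Type*} (m : ℕ) (F : ℕ → Set W) (Q : Set W) :
    ∀ a b, 1 ≤ a → a ≤ b → b ≤ m → Q ⊆ (⋃ j ∈ Finset.Icc a b, F j) →
      ∃ i, a ≤ i ∧ i ≤ b ∧ Q ⊆ assoc m F i := by
  intro a b ha hab hbm hQ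
  rcases Nat.even_or_odd b with hb | hb
  · exact ⟨b, hab, le_rfl, hQ.trans (biUnion_Icc_subset_assoc_of_even hb ha (by omega) hbm)⟩
  rcases hab.eq_or_lt with rfl | hab
  · refine ⟨a, le_rfl, le_rfl, ?_⟩
    rw [assoc_of_odd hb]
    rwa [Icc_self, set_biUnion_singleton] at hQ
  · have hb' : Even (b - 1) := Nat.Odd.sub_odd hb odd_one
    exact ⟨b - 1, by omega, by omega,
      hQ.trans (biUnion_Icc_subset_assoc_of_even hb' ha (by omega) hbm)⟩
end

section
/- Match-distance stability under trajectory perturbation: if L, L' : Fin n → X satisfy d(L i, L' i) ≤ ε for all i, then for all s ≤ e, |matchDist_L(q, s, e) − matchDist_{L'}(q, s, e)| ≤ (2(e − s) + 1)·ε, where matchDist_L uses the places of L. -/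
open Finset

section Perturbation

variable {X : Type*} [PseudoMetricSpace X]

theorem abs_min_dist_sub_min_dist_le (q a b a' b' : X) :
    |min (dist q a) (dist q b) - min (dist q a') (dist q b')| ≤ max (dist a a') (dist b b') :=
  (abs_min_sub_min_le_max _ _ _ _).trans <|
    max_le_max (dist_dist_dist_le_right q a a') (dist_dist_dist_le_right q b b')

theorem abs_sum_dist_succ_sub_le {L L' : ℕ → X} {ε : ℝ} {s e : ℕ}
    (h : ∀ i ∈ Icc s e, dist (L i) (L' i) ≤ ε) :
    |∑ i ∈ Ico s e, dist (L i) (L (i + 1)) - ∑ i ∈ Ico s e, dist (L' i) (L' (i + 1))| ≤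
      (e - s : ℕ) * (2 * ε) := by
  have hstep : ∀ i ∈ Ico s e,
      dist (dist (L i) (L (i + 1))) (dist (L' i) (L' (i + 1))) ≤ 2 * ε := fun i hi ↦ by
    obtain ⟨hsi, hie⟩ := mem_Ico.1 hi
    calc _ ≤ dist (L i) (L' i) + dist (L (i + 1)) (L' (i + 1)) := dist_dist_dist_le _ _ _ _
      _ ≤ ε + ε :=
        add_le_add (h i (mem_Icc.2 ⟨hsi, hie.le⟩)) (h (i + 1) (mem_Icc.2 ⟨by omega, hie⟩))
      _ = 2 * ε := by ring
  rw [← Real.dist_eq]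
  simpa [Nat.card_Ico] using dist_sum_sum_le_of_le (Ico s e) hstep

end Perturbation

theorem abs_matchDist_sub_matchDist_le {X : Type*} [MetricSpace X] (q : X) {L L' : ℕ → X}
    {ε : ℝ} {s e : ℕ} (hse : s ≤ e) (h : ∀ i ∈ Icc s e, dist (L i) (L' i) ≤ ε) :
    |matchDist q L s e - matchDist q L' s e| ≤ (2 * (e - s : ℕ) + 1) * ε := by
  have hmin : |min (dist q (L s)) (dist q (L e)) - min (dist q (L' s)) (dist q (L' e))| ≤ ε :=
    (abs_min_dist_sub_min_dist_le _ _ _ _ _).trans <|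
      max_le (h s (left_mem_Icc.2 hse)) (h e (right_mem_Icc.2 hse))
  calc |matchDist q L s e - matchDist q L' s e|
      = |(min (dist q (L s)) (dist q (L e)) - min (dist q (L' s)) (dist q (L' e))) +
          (∑ i ∈ Ico s e, dist (L i) (L (i + 1)) -
            ∑ i ∈ Ico s e, dist (L' i) (L' (i + 1)))| := by
        congr 1; unfold matchDist; ring
    _ ≤ ε + (e - s : ℕ) * (2 * ε) :=
        (abs_add_le _ _).trans (add_le_add hmin (abs_sum_dist_succ_sub_le h))
    _ = (2 * (e - s : ℕ) + 1) * ε := by ring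

theorem stmt_18_general {X : Type*} [MetricSpace X] (n : ℕ) (q : X) (L L' : ℕ → X) (ε : ℝ)
    (hLL' : ∀ i, i < n → dist (L i) (L' i) ≤ ε)
    (s e : ℕ) (hse : s ≤ e) (hen : e < n) :
    |matchDist q L s e - matchDist q L' s e| ≤ (2 * (e - s : ℕ) + 1) * ε :=
  abs_matchDist_sub_matchDist_le q hse fun i hi ↦ hLL' i ((mem_Icc.1 hi).2.trans_lt hen)

theorem stmt_18 {X : Type*} [MetricSpace X] (n : ℕ) (q : X) (L L' : ℕ → X) (ε : ℝ)
    (hε : 0 ≤ ε) (hLL' : ∀ i, i < n → dist (L i) (L' i) ≤ ε)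
    (s e : ℕ) (hse : s ≤ e) (hen : e < n) :
    |matchDist q L s e - matchDist q L' s e| ≤ (2 * (e - s : ℕ) + 1) * ε :=
  stmt_18_general n q L L' ε hLL' s e hse hen
end
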